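/- Let d be odd, θ a symmetric n×n matrix over ZMod d, and x ∈ (ZMod d)^n. The vector ψ(q) = d^{-n/2} χ(qθq + xq) is a stabilizer state: it satisfies the eigenvalue equations χ([v,mᵢ]) w(mᵢ) ψ = ψ for the maximally isotropic space M spanned by the columns mᵢ = (2θeᵢ, eᵢ) of the generator matrix (2θ; 1), with suitable v. -/
import Mathlib


open scoped BigOperators
open Finset Matrix
open scoped ComplexOrder

attribute [instance] Classical.propDecidable

/-- The character `χ(t) = exp(2πit/d)` on `ZMod d`. -/
noncomputable def chi (d : ℕ) (t : ZMod d) : ℂ :=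
  Complex.exp (2 * Real.pi * Complex.I * (t.val : ℂ) / (d : ℂ))

/-- The standard symplectic form on `(Fin n → R) × (Fin n → R)`. -/
def symp (R : Type) [CommRing R] (n : ℕ) (v w : (Fin n → R) × (Fin n → R)) : R :=
  (∑ i, v.1 i * w.2 i) - ∑ i, v.2 i * w.1 i

/-- Single-particle Weyl operator `w(p,q) = χ(-2⁻¹pq) ẑ(p) x̂(q)` on `ℂ^d`. -/
noncomputable def weyl1 (d : ℕ) (p q : ZMod d) : Matrix (ZMod d) (ZMod d) ℂ :=
  Matrix.of fun x y => chi d (-(2⁻¹ : ZMod d) * p * q + p * x) * (if y = x - q then 1 else 0)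

/-- Multi-particle Weyl operator on `(ℂ^d)^{⊗n}` in coordinates. -/
noncomputable def weyl (d n : ℕ) (p q : Fin n → ZMod d) :
    Matrix (Fin n → ZMod d) (Fin n → ZMod d) ℂ :=
  Matrix.of fun x y =>
    chi d (-(2⁻¹ : ZMod d) * (∑ i, p i * q i) + ∑ i, p i * x i) * (if y = x - q then 1 else 0)

/-- Weyl operator indexed by a phase space point. -/
noncomputable def weylV (d n : ℕ) (v : (Fin n → ZMod d) × (Fin n → ZMod d)) :
    Matrix (Fin n → ZMod d) (Fin n → ZMod d) ℂ :=
  weyl d n v.1 v.2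

/-- Action of the Weyl operator on wave functions:
`(w(p,q)ψ)(y) = χ(-2⁻¹pq + py) ψ(y-q)`. -/
noncomputable def weylAct (d n : ℕ) (p q : Fin n → ZMod d) (ψ : (Fin n → ZMod d) → ℂ) :
    (Fin n → ZMod d) → ℂ :=
  fun y => chi d (-(2⁻¹ : ZMod d) * (∑ i, p i * q i) + ∑ i, p i * y i) * ψ (y - q)

/-- Wigner function of a pure state `ψ`. -/
noncomputable def wignerPure (d n : ℕ) [NeZero d] (ψ : (Fin n → ZMod d) → ℂ)
    (p q : Fin n → ZMod d) : ℂ :=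
  ((d : ℂ) ^ n)⁻¹ * ∑ ξ : Fin n → ZMod d, chi d (-(∑ i, ξ i * p i)) *
    (starRingEnd ℂ) (ψ (q - (2⁻¹ : ZMod d) • ξ)) * ψ (q + (2⁻¹ : ZMod d) • ξ)

lemma chi_pow (d : ℕ) [NeZero d] (t : ZMod d) :
    chi d t = Complex.exp (2 * Real.pi * Complex.I / d) ^ t.val := by
  rw [← Complex.exp_nat_mul, chi]
  ring_nf

lemma zeta_pow_d (d : ℕ) [NeZero d] :
    Complex.exp (2 * Real.pi * Complex.I / d) ^ d = 1 := by
  rw [← Complex.exp_nat_mul]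
  have hd : (d : ℂ) ≠ 0 := Nat.cast_ne_zero.mpr (NeZero.ne d)
  rw [show (d : ℂ) * (2 * Real.pi * Complex.I / d) = 2 * Real.pi * Complex.I by field_simp]
  simpa [mul_comm] using Complex.exp_two_pi_mul_I

lemma chi_add (d : ℕ) [NeZero d] (a b : ZMod d) :
    chi d (a + b) = chi d a * chi d b := by
  rw [chi_pow, chi_pow, chi_pow, ← pow_add]
  have h := ZMod.val_add a b
  conv_lhs => rw [h]
  conv_rhs => rw [show a.val + b.val = d * ((a.val + b.val) / d) + (a.val + b.val) % d from
    (Nat.div_add_mod _ _).symm ▸ by omega]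
  rw [pow_add, pow_mul, zeta_pow_d, one_pow, one_mul]

lemma inv_two_mul_two (d : ℕ) [NeZero d] (hd : Odd d) : (2⁻¹ : ZMod d) * 2 = 1 := by
  have h2 : IsUnit (2 : ZMod d) := by
    rw [show (2 : ZMod d) = ((2 : ℕ) : ZMod d) by norm_cast, ZMod.isUnit_iff_coprime]
    have hnd : ¬ (2 ∣ d) := by obtain ⟨k, hk⟩ := hd; omega
    exact (Nat.Prime.coprime_iff_not_dvd Nat.prime_two).mpr hnd
  exact ZMod.inv_mul_of_unit _ h2

lemma chi_mul_arrange (d : ℕ) [NeZero d] (c : ℂ) (a b e f : ZMod d)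
    (h : a + (b + e) = f) :
    chi d a * (chi d b * (c * chi d e)) = c * chi d f := by
  rw [← h, chi_add, chi_add]; ring

/-- The discrete Gaussian `ψ(q) = d^{-n/2} χ(qθq + xq)` is a stabilizer
state: it satisfies the eigenvalue equations `χ([v,mᵢ]) w(mᵢ) ψ = ψ` for the columns
`mᵢ = (2θeᵢ, eᵢ)` of the generator matrix, with a suitable `v` satisfying `[v,mᵢ] = xᵢ`. -/
theorem gaussian_is_stabilizer (d n : ℕ) [NeZero d] (hd : Odd d)
    (θ : Matrix (Fin n) (Fin n) (ZMod d)) (hθ : θ.IsSymm) (x : Fin n → ZMod d) :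
    ∀ ψ : (Fin n → ZMod d) → ℂ,
      ψ = (fun q => (Real.sqrt ((d : ℝ) ^ n) : ℂ)⁻¹ *
        chi d ((∑ i, q i * θ.mulVec q i) + ∑ i, x i * q i)) →
    ∀ m : Fin n → (Fin n → ZMod d) × (Fin n → ZMod d),
      m = (fun i => ((2 : ZMod d) • θ.mulVec (Pi.single i 1), Pi.single i 1)) →
    ∃ v : (Fin n → ZMod d) × (Fin n → ZMod d),
      (∀ i, symp (ZMod d) n v (m i) = x i) ∧
      (∀ i, chi d (symp (ZMod d) n v (m i)) • weylAct d n (m i).1 (m i).2 ψ = ψ) := by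
  intro ψ hψ m hm
  subst hψ hm
  have h2 : (2⁻¹ : ZMod d) * 2 = 1 := inv_two_mul_two d hd
  have hsymp : ∀ i, symp (ZMod d) n (x, 0)
      ((2 : ZMod d) • θ.mulVec (Pi.single i 1), Pi.single i 1) = x i := by
    intro i
    simp [symp, Pi.single_apply]
  refine ⟨(x, 0), fun i => hsymp i, fun i => ?_⟩
  funext y
  simp only [Pi.smul_apply, smul_eq_mul, weylAct, hsymp i]
  have hmv : ∀ j, θ.mulVec ((Pi.single i 1 : Fin n → ZMod d)) j = θ j i := by
    intro j; simp [Matrix.mulVec_single]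
  have hC : (∑ j, y j * θ j i) = θ.mulVec y i := by
    simp only [Matrix.mulVec, dotProduct]
    refine Finset.sum_congr rfl fun j _ => ?_
    rw [← hθ.apply i j]; exact mul_comm _ _
  have hA : (∑ j, (Pi.single i 1 : Fin n → ZMod d) j * θ.mulVec y j) = θ.mulVec y i := by
    simp [Pi.single_apply]
  have hB : (∑ j, (Pi.single i 1 : Fin n → ZMod d) j * θ j i) = θ i i := by
    simp [Pi.single_apply]
  have hD : (∑ j, x j * (Pi.single i 1 : Fin n → ZMod d) j) = x i := by
    simp [Pi.single_apply]
  refine chi_mul_arrange d _ _ _ _ _ ?_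
  simp only [Pi.smul_apply, smul_eq_mul, Matrix.mulVec_sub, Pi.sub_apply, hmv]
  have e1 : (∑ j, (2 : ZMod d) * θ j i * (Pi.single i 1 : Fin n → ZMod d) j) = 2 * θ i i := by
    simp [Pi.single_apply]
  have e2 : (∑ j, (2 : ZMod d) * θ j i * y j) = 2 * θ.mulVec y i := by
    rw [← hC, Finset.mul_sum]
    exact Finset.sum_congr rfl fun j _ => by ring
  have e3 : (∑ j, (y j - (Pi.single i 1 : Fin n → ZMod d) j) * (θ.mulVec y j - θ j i)) =
      (∑ j, y j * θ.mulVec y j) - (∑ j, y j * θ j i)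
        - (∑ j, (Pi.single i 1 : Fin n → ZMod d) j * θ.mulVec y j)
        + ∑ j, (Pi.single i 1 : Fin n → ZMod d) j * θ j i := by
    rw [← Finset.sum_sub_distrib, ← Finset.sum_sub_distrib, ← Finset.sum_add_distrib]
    exact Finset.sum_congr rfl fun j _ => by ring
  have e4 : (∑ j, x j * (y j - (Pi.single i 1 : Fin n → ZMod d) j)) =
      (∑ j, x j * y j) - ∑ j, x j * (Pi.single i 1 : Fin n → ZMod d) j := by
    rw [← Finset.sum_sub_distrib]
    exact Finset.sum_congr rfl fun j _ => by ring
  rw [e1, e2, e3, e4, hC, hA, hB, hD]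
  linear_combination (-(θ i i)) * h2
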